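/- For each λ ∈ (0,1], the function d_λ(T_a,T_b) = ‖v_λ(T_a) − v_λ(T_b)‖₂ is a metric on the set of rooted binary trees on k labeled tips with positive branch lengths; in particular d_λ(T_a,T_b) = 0 implies T_a = T_b. -/

import Mathlib

/-- Rooted binary trees with tips labeled by `Fin k`; each internal node
stores the branch lengths of the edges to its two children. -/
inductive RTree (k : ℕ) : Type
  | leaf : Fin k → RTree k
  | node : ℝ → RTree k → ℝ → RTree k → RTree k

namespace RTree

variable {k : ℕ}

/-- The list of tip labels of a tree. -/
def tipList : RTree k → List (Fin k)
  | leaf i => [i]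
  | node _ l _ r => l.tipList ++ r.tipList

/-- The set of tip labels of a tree. -/
def tips (T : RTree k) : Finset (Fin k) := T.tipList.toFinset

/-- `T` is a phylogenetic tree on `k` labeled tips: each label occurs exactly once. -/
def IsPhylo (T : RTree k) : Prop := T.tipList.Nodup ∧ ∀ i : Fin k, i ∈ T.tipList

/-- All branch lengths are positive. -/
def PosLens : RTree k → Prop
  | leaf _ => True
  | node a l b r => 0 < a ∧ 0 < b ∧ PosLens l ∧ PosLens r

/-- All branch lengths are nonnegative. -/
def NonnegLens : RTree k → Prop
  | leaf _ => True
  | node a l b r => 0 ≤ a ∧ 0 ≤ b ∧ NonnegLens l ∧ NonnegLens r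

/-- All branch lengths are at most `ε`. -/
def LensLE (ε : ℝ) : RTree k → Prop
  | leaf _ => True
  | node a l b r => a ≤ ε ∧ b ≤ ε ∧ LensLE ε l ∧ LensLE ε r

/-- All branch lengths are equal to `1`. -/
def UnitLens : RTree k → Prop
  | leaf _ => True
  | node a l b r => a = 1 ∧ b = 1 ∧ UnitLens l ∧ UnitLens r

/-- `m T i j`: the number of edges on the path from the root to the
most recent common ancestor of tips `i` and `j`. -/
def m : RTree k → Fin k → Fin k → ℕ
  | leaf _, _, _ => 0
  | node _ l _ r, i, j =>
      if i ∈ l.tips ∧ j ∈ l.tips then m l i j + 1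
      else if i ∈ r.tips ∧ j ∈ r.tips then m r i j + 1
      else 0

/-- `Mlen T i j`: the sum of branch lengths on the path from the root to the
most recent common ancestor of tips `i` and `j`. -/
def Mlen : RTree k → Fin k → Fin k → ℝ
  | leaf _, _, _ => 0
  | node a l b r, i, j =>
      if i ∈ l.tips ∧ j ∈ l.tips then Mlen l i j + a
      else if i ∈ r.tips ∧ j ∈ r.tips then Mlen r i j + b
      else 0

/-- Whether the tree is a single leaf. -/
def isLeaf : RTree k → Bool
  | leaf _ => true
  | node _ _ _ _ => false

/-- `pend T i`: the length of the pendant edge leading to tip `i`. -/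
def pend : RTree k → Fin k → ℝ
  | leaf _, _ => 0
  | node a l b r, i =>
      if i ∈ l.tips then (if l.isLeaf then a else pend l i)
      else if i ∈ r.tips then (if r.isLeaf then b else pend r i)
      else 0

/-- The set of clades (tip sets of rooted subtrees) of a tree.  Two rooted
trees have the same topology iff they have the same set of clades, i.e. their
internal edges induce the same tip partitions. -/
def clades : RTree k → Set (Finset (Fin k))
  | leaf i => {{i}}
  | node a l b r => insert (node a l b r).tips (clades l ∪ clades r)

/-- Equality of rooted trees: same topology (ignoring the left/right order of
children) and equal corresponding branch lengths. -/
inductive TreeEq : RTree k → RTree k → Prop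
  | leaf (i : Fin k) : TreeEq (.leaf i) (.leaf i)
  | node {l l' r r' : RTree k} (a b : ℝ) :
      TreeEq l l' → TreeEq r r' → TreeEq (.node a l b r) (.node a l' b r')
  | swap {l l' r r' : RTree k} (a b : ℝ) :
      TreeEq l l' → TreeEq r r' → TreeEq (.node a l b r) (.node b r' a l')

/-- `S` is the rooted subtree of `T` hanging at a node at edge-depth `d`. -/
inductive SubtreeAt : RTree k → ℕ → RTree k → Prop
  | refl (T : RTree k) : SubtreeAt T 0 T
  | left {l S : RTree k} {d : ℕ} (a b : ℝ) (r : RTree k) :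
      SubtreeAt l d S → SubtreeAt (.node a l b r) (d + 1) S
  | right {r S : RTree k} {d : ℕ} (a b : ℝ) (l : RTree k) :
      SubtreeAt r d S → SubtreeAt (.node a l b r) (d + 1) S

/-- Relabel the tips of a tree by a permutation. -/
def relabel (σ : Equiv.Perm (Fin k)) : RTree k → RTree k
  | leaf i => leaf (σ i)
  | node a l b r => node a (relabel σ l) b (relabel σ r)

/-- The set of unordered pairs of distinct tips, represented by ordered pairs `(i, j)` with `i < j`. -/
def tipPairs (k : ℕ) : Finset (Fin k × Fin k) :=
  Finset.univ.filter (fun p => p.1 < p.2)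

/-- The `λ`-entry of the tree vector `v_λ(T)` at the pair `(i, j)`:
`(1 − λ) m_{i,j} + λ M_{i,j}`. -/
noncomputable def vPair (lam : ℝ) (T : RTree k) (i j : Fin k) : ℝ :=
  (1 - lam) * (T.m i j : ℝ) + lam * T.Mlen i j

/-- The `λ`-entry of the tree vector `v_λ(T)` at tip `i`: `(1 − λ) · 1 + λ p_i`. -/
noncomputable def vTip (lam : ℝ) (T : RTree k) (i : Fin k) : ℝ :=
  (1 - lam) * 1 + lam * T.pend i

/-- The metric `d_λ(T_a, T_b) = ‖v_λ(T_a) − v_λ(T_b)‖₂`. -/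
noncomputable def treeDist (lam : ℝ) (Ta Tb : RTree k) : ℝ :=
  Real.sqrt
    ((∑ p ∈ tipPairs k, (vPair lam Ta p.1 p.2 - vPair lam Tb p.1 p.2) ^ 2) +
      ∑ i : Fin k, (vTip lam Ta i - vTip lam Tb i) ^ 2)

/-- `‖m(T_a) − m(T_b)‖₂`, the Euclidean distance between the topology vectors
(the final `k` entries of `m` are all `1` and contribute nothing). -/
noncomputable def mDist (Ta Tb : RTree k) : ℝ :=
  Real.sqrt (∑ p ∈ tipPairs k, ((Ta.m p.1 p.2 : ℝ) - (Tb.m p.1 p.2 : ℝ)) ^ 2)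

/-- `‖M(T_a) − M(T_b)‖₂`, the Euclidean distance between the
branch-length vectors (root-to-MRCA path lengths and pendant lengths). -/
noncomputable def MDist (Ta Tb : RTree k) : ℝ :=
  Real.sqrt
    ((∑ p ∈ tipPairs k, (Ta.Mlen p.1 p.2 - Tb.Mlen p.1 p.2) ^ 2) +
      ∑ i : Fin k, (Ta.pend i - Tb.pend i) ^ 2)

/-- `D_λ(T_a,T_b) = (1−λ)‖m(T_a)−m(T_b)‖₂ + λ‖M(T_a)−M(T_b)‖₂`. -/
noncomputable def DDist (lam : ℝ) (Ta Tb : RTree k) : ℝ :=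
  (1 - lam) * mDist Ta Tb + lam * MDist Ta Tb

section Aux

variable {k : ℕ}

lemma tips_leaf (i : Fin k) : (leaf i : RTree k).tips = {i} := rfl

lemma tips_node (a b : ℝ) (l r : RTree k) :
    (node a l b r).tips = l.tips ∪ r.tips := by
  simp [tips, tipList]

lemma tips_nonempty (T : RTree k) : T.tips.Nonempty := by
  induction T with
  | leaf i => exact ⟨i, by simp [tips, tipList]⟩
  | node a l b r ihl ihr => exact ⟨ihl.choose, by simp [tips_node, Finset.mem_union, ihl.choose_spec]⟩

lemma nodup_left {a b : ℝ} {l r : RTree k} (h : (node a l b r).tipList.Nodup) :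
    l.tipList.Nodup := by
  simp only [tipList, List.nodup_append] at h; exact h.1

lemma nodup_right {a b : ℝ} {l r : RTree k} (h : (node a l b r).tipList.Nodup) :
    r.tipList.Nodup := by
  simp only [tipList, List.nodup_append] at h; exact h.2.1

lemma tips_disj {a b : ℝ} {l r : RTree k} (h : (node a l b r).tipList.Nodup)
    {x : Fin k} (hx : x ∈ l.tips) (hx' : x ∈ r.tips) : False := by
  simp only [tipList, List.nodup_append] at h
  simp only [tips, List.mem_toFinset] at hx hx'
  exact h.2.2 x hx x hx' rfl

lemma eq_leaf_of_tips_singleton {T : RTree k} (hn : T.tipList.Nodup) {i : Fin k}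
    (h : T.tips = {i}) : T = leaf i := by
  cases T with
  | leaf j =>
    have : j ∈ ({i} : Finset (Fin k)) := by rw [← h]; simp [tips, tipList]
    simp at this; rw [this]
  | node a l b r =>
    obtain ⟨x, hx⟩ := tips_nonempty l
    obtain ⟨y, hy⟩ := tips_nonempty r
    have hxy : x ≠ y := fun e => tips_disj hn (e ▸ hx) hy
    have hx' : x ∈ (node a l b r).tips := by rw [tips_node]; exact Finset.mem_union_left _ hx
    have hy' : y ∈ (node a l b r).tips := by rw [tips_node]; exact Finset.mem_union_right _ hy
    rw [h] at hx' hy'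
    simp at hx' hy'
    exact absurd (hx'.trans hy'.symm) hxy

lemma m_comm (T : RTree k) (i j : Fin k) : m T i j = m T j i := by
  induction T with
  | leaf => rfl
  | node a l b r ihl ihr =>
    simp only [m]
    by_cases hil : i ∈ l.tips <;> by_cases hjl : j ∈ l.tips <;>
      by_cases hir : i ∈ r.tips <;> by_cases hjr : j ∈ r.tips <;>
      simp [hil, hjl, hir, hjr, ihl, ihr]

lemma Mlen_comm (T : RTree k) (i j : Fin k) : Mlen T i j = Mlen T j i := by
  induction T with
  | leaf => rfl
  | node a l b r ihl ihr =>
    simp only [Mlen]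
    by_cases hil : i ∈ l.tips <;> by_cases hjl : j ∈ l.tips <;>
      by_cases hir : i ∈ r.tips <;> by_cases hjr : j ∈ r.tips <;>
      simp [hil, hjl, hir, hjr, ihl, ihr]

lemma Mlen_nonneg {T : RTree k} (h : T.PosLens) (i j : Fin k) : 0 ≤ Mlen T i j := by
  induction T with
  | leaf => simp [Mlen]
  | node a l b r ihl ihr =>
    obtain ⟨ha, hb, hl, hr⟩ := h
    simp only [Mlen]
    split_ifs with h1 h2
    · have := ihl hl; linarith
    · have := ihr hr; linarith
    · exact le_rfl

lemma vPair_nonneg {lam : ℝ} (h0 : 0 < lam) (h1 : lam ≤ 1) {T : RTree k}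
    (hp : T.PosLens) (i j : Fin k) : 0 ≤ vPair lam T i j := by
  unfold vPair
  have h2 : (0:ℝ) ≤ (T.m i j : ℝ) := Nat.cast_nonneg _
  have h3 := Mlen_nonneg hp i j
  nlinarith

lemma vPair_left {lam a b : ℝ} {l r : RTree k} {i j : Fin k}
    (hi : i ∈ l.tips) (hj : j ∈ l.tips) :
    vPair lam (node a l b r) i j = vPair lam l i j + ((1 - lam) + lam * a) := by
  unfold vPair
  simp only [m, Mlen, if_pos (And.intro hi hj)]
  push_cast; ring

lemma vPair_right {lam a b : ℝ} {l r : RTree k} {i j : Fin k}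
    (hn : ¬(i ∈ l.tips ∧ j ∈ l.tips)) (hi : i ∈ r.tips) (hj : j ∈ r.tips) :
    vPair lam (node a l b r) i j = vPair lam r i j + ((1 - lam) + lam * b) := by
  unfold vPair
  simp only [m, Mlen, if_neg hn, if_pos (And.intro hi hj)]
  push_cast; ring

lemma vPair_cross {lam a b : ℝ} {l r : RTree k} {i j : Fin k}
    (hn : (node a l b r).tipList.Nodup)
    (h : (i ∈ l.tips ∧ j ∈ r.tips) ∨ (i ∈ r.tips ∧ j ∈ l.tips)) :
    vPair lam (node a l b r) i j = 0 := by
  have h1 : ¬(i ∈ l.tips ∧ j ∈ l.tips) := by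
    rintro ⟨hil, hjl⟩
    rcases h with ⟨_, hjr⟩ | ⟨hir, _⟩
    · exact tips_disj hn hjl hjr
    · exact tips_disj hn hil hir
  have h2 : ¬(i ∈ r.tips ∧ j ∈ r.tips) := by
    rintro ⟨hir, hjr⟩
    rcases h with ⟨hil, _⟩ | ⟨_, hjl⟩
    · exact tips_disj hn hil hir
    · exact tips_disj hn hjl hjr
  unfold vPair
  simp [m, Mlen, if_neg h1, if_neg h2]

lemma base_pos {lam a : ℝ} (h0 : 0 < lam) (h1 : lam ≤ 1) (ha : 0 < a) :
    0 < (1 - lam) + lam * a := by nlinarith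

lemma vPair_pos_left {lam a b : ℝ} (h0 : 0 < lam) (h1 : lam ≤ 1) {l r : RTree k}
    (hp : (node a l b r).PosLens) {i j : Fin k} (hi : i ∈ l.tips) (hj : j ∈ l.tips) :
    0 < vPair lam (node a l b r) i j := by
  obtain ⟨ha, hb, hl, hr⟩ := hp
  rw [vPair_left hi hj]
  have := vPair_nonneg h0 h1 hl i j
  have := base_pos h0 h1 ha (lam := lam)
  linarith

lemma vPair_pos_right {lam a b : ℝ} (h0 : 0 < lam) (h1 : lam ≤ 1) {l r : RTree k}
    (hn : (node a l b r).tipList.Nodup)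
    (hp : (node a l b r).PosLens) {i j : Fin k} (hi : i ∈ r.tips) (hj : j ∈ r.tips) :
    0 < vPair lam (node a l b r) i j := by
  obtain ⟨ha, hb, hl, hr⟩ := hp
  rw [vPair_right (fun h => tips_disj hn h.1 hi) hi hj]
  have := vPair_nonneg h0 h1 hr i j
  have := base_pos h0 h1 hb (lam := lam)
  linarith

/-- If `i` is on the left side and `vPair` is positive then `j` is on the left side too. -/
lemma mem_left_of_vPair_pos {lam a b : ℝ} {l r : RTree k}
    (hn : (node a l b r).tipList.Nodup) {i j : Fin k}
    (hi : i ∈ l.tips) (hj : j ∈ (node a l b r).tips)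
    (hpos : 0 < vPair lam (node a l b r) i j) : j ∈ l.tips := by
  rw [tips_node, Finset.mem_union] at hj
  rcases hj with hj | hj
  · exact hj
  · exact absurd (vPair_cross hn (Or.inl ⟨hi, hj⟩)) (ne_of_gt hpos)

lemma mem_right_of_vPair_pos {lam a b : ℝ} {l r : RTree k}
    (hn : (node a l b r).tipList.Nodup) {i j : Fin k}
    (hi : i ∈ r.tips) (hj : j ∈ (node a l b r).tips)
    (hpos : 0 < vPair lam (node a l b r) i j) : j ∈ r.tips := by
  rw [tips_node, Finset.mem_union] at hj
  rcases hj with hj | hj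
  · exact absurd (vPair_cross hn (Or.inr ⟨hi, hj⟩)) (ne_of_gt hpos)
  · exact hj

lemma side_main {lam : ℝ} (h0 : 0 < lam) (h1 : lam ≤ 1) {l l' : RTree k} {a a' : ℝ}
    (ha : 0 < a) (ha' : 0 < a')
    (hnl : l.tipList.Nodup) (hnl' : l'.tipList.Nodup)
    (hpl : l.PosLens) (hpl' : l'.PosLens)
    (hts : l.tips = l'.tips)
    (hv : ∀ i j, i ∈ l.tips → j ∈ l.tips → i ≠ j →
      vPair lam l i j + ((1 - lam) + lam * a) = vPair lam l' i j + ((1 - lam) + lam * a'))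
    (hpend : ∀ i, i ∈ l.tips →
      (if l.isLeaf then a else pend l i) = (if l'.isLeaf then a' else pend l' i))
    (IH : ∀ Tb : RTree k, Tb.tipList.Nodup → Tb.PosLens → l.tips = Tb.tips →
      (∀ i j, i ∈ l.tips → j ∈ l.tips → i ≠ j → vPair lam l i j = vPair lam Tb i j) →
      (∀ i, i ∈ l.tips → pend l i = pend Tb i) → TreeEq l Tb) :
    a = a' ∧ TreeEq l l' := by
  cases l with
  | leaf i =>
    have hl' : l' = leaf i := eq_leaf_of_tips_singleton hnl' (by rw [← hts]; rfl)
    subst hl'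
    have e := hpend i (by rw [tips_leaf]; exact Finset.mem_singleton_self i)
    simp only [isLeaf, if_pos] at e
    exact ⟨e, TreeEq.leaf i⟩
  | node a2 l2 b2 r2 =>
    cases l' with
    | leaf i' =>
      exact absurd (eq_leaf_of_tips_singleton hnl (hts.trans (tips_leaf i')))
        (fun h => by cases h)
    | node a2' l2' b2' r2' =>
      obtain ⟨x, hx⟩ := tips_nonempty l2
      obtain ⟨y, hy⟩ := tips_nonempty r2
      have hxy : x ≠ y := fun e => tips_disj hnl (e ▸ hx) hy
      have hxT : x ∈ (node a2 l2 b2 r2).tips := by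
        rw [tips_node]; exact Finset.mem_union_left _ hx
      have hyT : y ∈ (node a2 l2 b2 r2).tips := by
        rw [tips_node]; exact Finset.mem_union_right _ hy
      have e1 := hv x y hxT hyT hxy
      rw [vPair_cross hnl (Or.inl ⟨hx, hy⟩)] at e1
      have nn1 := vPair_nonneg h0 h1 hpl' x y
      have haa1 : a' ≤ a := by
        have : lam * a' ≤ lam * a := by linarith
        exact le_of_mul_le_mul_left this h0
      obtain ⟨x', hx'⟩ := tips_nonempty l2'
      obtain ⟨y', hy'⟩ := tips_nonempty r2'
      have hxy' : x' ≠ y' := fun e => tips_disj hnl' (e ▸ hx') hy'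
      have hxT' : x' ∈ (node a2 l2 b2 r2).tips := by
        rw [hts, tips_node]; exact Finset.mem_union_left _ hx'
      have hyT' : y' ∈ (node a2 l2 b2 r2).tips := by
        rw [hts, tips_node]; exact Finset.mem_union_right _ hy'
      have e2 := hv x' y' hxT' hyT' hxy'
      rw [vPair_cross hnl' (Or.inl ⟨hx', hy'⟩)] at e2
      have nn2 := vPair_nonneg h0 h1 hpl x' y'
      have haa2 : a ≤ a' := by
        have : lam * a ≤ lam * a' := by linarith
        exact le_of_mul_le_mul_left this h0
      have haa : a = a' := le_antisymm haa2 haa1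
      subst haa
      refine ⟨rfl, IH _ hnl' hpl' hts ?_ ?_⟩
      · intro i j hi hj hij
        have := hv i j hi hj hij
        linarith
      · intro i hi
        have e := hpend i hi
        simpa only [isLeaf, if_neg, Bool.false_eq_true, if_false] using e

lemma reconstruct {lam : ℝ} (h0 : 0 < lam) (h1 : lam ≤ 1) :
    ∀ Ta Tb : RTree k, Ta.tipList.Nodup → Tb.tipList.Nodup → Ta.PosLens → Tb.PosLens →
    Ta.tips = Tb.tips →
    (∀ i j, i ∈ Ta.tips → j ∈ Ta.tips → i ≠ j → vPair lam Ta i j = vPair lam Tb i j) →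
    (∀ i, i ∈ Ta.tips → pend Ta i = pend Tb i) → TreeEq Ta Tb := by
  intro Ta
  induction Ta with
  | leaf i =>
    intro Tb hnA hnB _ _ hts _ _
    have : Tb = leaf i := eq_leaf_of_tips_singleton hnB (by rw [← hts]; rfl)
    rw [this]; exact TreeEq.leaf i
  | node a l b r IHl IHr =>
    intro Tb hnA hnB hpA hpB hts hv hpend
    cases Tb with
    | leaf i =>
      exact absurd (eq_leaf_of_tips_singleton hnA (hts.trans (tips_leaf i)))
        (fun h => by cases h)
    | node a' l' b' r' =>
      obtain ⟨ha, hb, hpl, hpr⟩ := hpA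
      obtain ⟨ha', hb', hpl', hpr'⟩ := hpB
      have hpA' : PosLens (node a l b r) := ⟨ha, hb, hpl, hpr⟩
      have hpB' : PosLens (node a' l' b' r') := ⟨ha', hb', hpl', hpr'⟩
      have memL : ∀ {x : Fin k}, x ∈ l.tips → x ∈ (node a l b r).tips := by
        intro x hx; rw [tips_node]; exact Finset.mem_union_left _ hx
      have memR : ∀ {x : Fin k}, x ∈ r.tips → x ∈ (node a l b r).tips := by
        intro x hx; rw [tips_node]; exact Finset.mem_union_right _ hx
      have memL' : ∀ {x : Fin k}, x ∈ l'.tips → x ∈ (node a l b r).tips := by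
        intro x hx; rw [hts, tips_node]; exact Finset.mem_union_left _ hx
      have memR' : ∀ {x : Fin k}, x ∈ r'.tips → x ∈ (node a l b r).tips := by
        intro x hx; rw [hts, tips_node]; exact Finset.mem_union_right _ hx
      obtain ⟨i0, hi0⟩ := tips_nonempty l'
      have hi0T : i0 ∈ (node a l b r).tips := memL' hi0
      rw [tips_node, Finset.mem_union] at hi0T
      rcases hi0T with h0l | h0r
      · -- straight case: tips l = tips l'
        have hll' : l.tips = l'.tips := by
          ext j; constructor
          · intro hj
            by_cases hji : j = i0
            · subst hji; exact hi0
            · have hp1 : 0 < vPair lam (node a l b r) i0 j :=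
                vPair_pos_left h0 h1 hpA' h0l hj
              have e := hv i0 j (memL h0l) (memL hj) (fun h => hji h.symm)
              exact mem_left_of_vPair_pos hnB hi0
                (by rw [← hts]; exact memL hj) (e ▸ hp1)
          · intro hj
            by_cases hji : j = i0
            · subst hji; exact h0l
            · have hp2 : 0 < vPair lam (node a' l' b' r') i0 j :=
                vPair_pos_left h0 h1 hpB' hi0 hj
              have e := hv i0 j (memL h0l) (memL' hj) (fun h => hji h.symm)
              exact mem_left_of_vPair_pos hnA h0l (memL' hj) (by rw [e]; exact hp2)
        have hrr' : r.tips = r'.tips := by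
          ext j; constructor
          · intro hj
            have hjT : j ∈ (node a' l' b' r').tips := by rw [← hts]; exact memR hj
            rw [tips_node, Finset.mem_union] at hjT
            rcases hjT with hjl' | hjr'
            · exact absurd hj (fun h => tips_disj hnA (hll' ▸ hjl') h)
            · exact hjr'
          · intro hj
            have hjT : j ∈ (node a l b r).tips := memR' hj
            rw [tips_node, Finset.mem_union] at hjT
            rcases hjT with hjl | hjr
            · exact absurd hj (fun h => tips_disj hnB (hll' ▸ hjl) h)
            · exact hjr
        have hvl : ∀ i j, i ∈ l.tips → j ∈ l.tips → i ≠ j →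
            vPair lam l i j + ((1 - lam) + lam * a) =
              vPair lam l' i j + ((1 - lam) + lam * a') := by
          intro i j hi hj hij
          have e := hv i j (memL hi) (memL hj) hij
          rwa [vPair_left hi hj, vPair_left (hll' ▸ hi) (hll' ▸ hj)] at e
        have hpendl : ∀ i, i ∈ l.tips →
            (if l.isLeaf then a else pend l i) = (if l'.isLeaf then a' else pend l' i) := by
          intro i hi
          have e := hpend i (memL hi)
          simp only [pend] at e
          rwa [if_pos hi, if_pos (show i ∈ l'.tips from hll' ▸ hi)] at e
        obtain ⟨haa, hTl⟩ := side_main h0 h1 ha ha' (nodup_left hnA) (nodup_left hnB)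
          hpl hpl' hll' hvl hpendl
          (fun T2 hn2 hp2 => IHl T2 (nodup_left hnA) hn2 hpl hp2)
        have hvr : ∀ i j, i ∈ r.tips → j ∈ r.tips → i ≠ j →
            vPair lam r i j + ((1 - lam) + lam * b) =
              vPair lam r' i j + ((1 - lam) + lam * b') := by
          intro i j hi hj hij
          have e := hv i j (memR hi) (memR hj) hij
          rwa [vPair_right (fun h => tips_disj hnA h.1 hi) hi hj,
               vPair_right (fun h => tips_disj hnB h.1 (hrr' ▸ hi)) (hrr' ▸ hi) (hrr' ▸ hj)] at e
        have hpendr : ∀ i, i ∈ r.tips →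
            (if r.isLeaf then b else pend r i) = (if r'.isLeaf then b' else pend r' i) := by
          intro i hi
          have e := hpend i (memR hi)
          simp only [pend] at e
          rwa [if_neg (fun h => tips_disj hnA h hi), if_pos hi,
               if_neg (fun h => tips_disj hnB h (hrr' ▸ hi)),
               if_pos (show i ∈ r'.tips from hrr' ▸ hi)] at e
        obtain ⟨hbb, hTr⟩ := side_main h0 h1 hb hb' (nodup_right hnA) (nodup_right hnB)
          hpr hpr' hrr' hvr hpendr
          (fun T2 hn2 hp2 => IHr T2 (nodup_right hnA) hn2 hpr hp2)
        subst haa; subst hbb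
        exact TreeEq.node a b hTl hTr
      · -- swapped case: tips r = tips l'
        have hrl' : r.tips = l'.tips := by
          ext j; constructor
          · intro hj
            by_cases hji : j = i0
            · subst hji; exact hi0
            · have hp1 : 0 < vPair lam (node a l b r) i0 j :=
                vPair_pos_right h0 h1 hnA hpA' h0r hj
              have e := hv i0 j (memR h0r) (memR hj) (fun h => hji h.symm)
              exact mem_left_of_vPair_pos hnB hi0
                (by rw [← hts]; exact memR hj) (e ▸ hp1)
          · intro hj
            by_cases hji : j = i0
            · subst hji; exact h0r
            · have hp2 : 0 < vPair lam (node a' l' b' r') i0 j :=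
                vPair_pos_left h0 h1 hpB' hi0 hj
              have e := hv i0 j (memR h0r) (memL' hj) (fun h => hji h.symm)
              exact mem_right_of_vPair_pos hnA h0r (memL' hj) (by rw [e]; exact hp2)
        have hlr' : l.tips = r'.tips := by
          ext j; constructor
          · intro hj
            have hjT : j ∈ (node a' l' b' r').tips := by rw [← hts]; exact memL hj
            rw [tips_node, Finset.mem_union] at hjT
            rcases hjT with hjl' | hjr'
            · exact absurd hj (fun h => tips_disj hnA h (hrl' ▸ hjl'))
            · exact hjr'
          · intro hj
            have hjT : j ∈ (node a l b r).tips := memR' hj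
            rw [tips_node, Finset.mem_union] at hjT
            rcases hjT with hjl | hjr
            · exact hjl
            · exact absurd hj (fun h => tips_disj hnB (hrl' ▸ hjr) h)
        have hvl : ∀ i j, i ∈ l.tips → j ∈ l.tips → i ≠ j →
            vPair lam l i j + ((1 - lam) + lam * a) =
              vPair lam r' i j + ((1 - lam) + lam * b') := by
          intro i j hi hj hij
          have e := hv i j (memL hi) (memL hj) hij
          rwa [vPair_left hi hj,
               vPair_right (fun h => tips_disj hnB h.1 (hlr' ▸ hi)) (hlr' ▸ hi) (hlr' ▸ hj)] at e
        have hpendl : ∀ i, i ∈ l.tips →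
            (if l.isLeaf then a else pend l i) = (if r'.isLeaf then b' else pend r' i) := by
          intro i hi
          have e := hpend i (memL hi)
          simp only [pend] at e
          rwa [if_pos hi, if_neg (fun h => tips_disj hnB h (hlr' ▸ hi)),
               if_pos (show i ∈ r'.tips from hlr' ▸ hi)] at e
        obtain ⟨hab, hTlr⟩ := side_main h0 h1 ha hb' (nodup_left hnA) (nodup_right hnB)
          hpl hpr' hlr' hvl hpendl
          (fun T2 hn2 hp2 => IHl T2 (nodup_left hnA) hn2 hpl hp2)
        have hvr : ∀ i j, i ∈ r.tips → j ∈ r.tips → i ≠ j →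
            vPair lam r i j + ((1 - lam) + lam * b) =
              vPair lam l' i j + ((1 - lam) + lam * a') := by
          intro i j hi hj hij
          have e := hv i j (memR hi) (memR hj) hij
          rwa [vPair_right (fun h => tips_disj hnA h.1 hi) hi hj,
               vPair_left (hrl' ▸ hi) (hrl' ▸ hj)] at e
        have hpendr : ∀ i, i ∈ r.tips →
            (if r.isLeaf then b else pend r i) = (if l'.isLeaf then a' else pend l' i) := by
          intro i hi
          have e := hpend i (memR hi)
          simp only [pend] at e
          rwa [if_neg (fun h => tips_disj hnA h hi), if_pos hi,
               if_pos (show i ∈ l'.tips from hrl' ▸ hi)] at e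
        obtain ⟨hba, hTrl⟩ := side_main h0 h1 hb ha' (nodup_right hnA) (nodup_left hnB)
          hpr hpl' hrl' hvr hpendr
          (fun T2 hn2 hp2 => IHr T2 (nodup_right hnA) hn2 hpr hp2)
        subst hab; subst hba
        exact TreeEq.swap a b hTlr hTrl

lemma TreeEq.tips_eq {t t' : RTree k} (h : TreeEq t t') : t.tips = t'.tips := by
  induction h with
  | leaf i => rfl
  | node a b hl hr ihl ihr => rw [tips_node, tips_node, ihl, ihr]
  | swap a b hl hr ihl ihr => rw [tips_node, tips_node, ihl, ihr, Finset.union_comm]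

lemma TreeEq.isLeaf_eq {t t' : RTree k} (h : TreeEq t t') : t.isLeaf = t'.isLeaf := by
  cases h <;> rfl

lemma TreeEq.m_eq {t t' : RTree k} (h : TreeEq t t') (hn : t.tipList.Nodup)
    (i j : Fin k) : m t i j = m t' i j := by
  induction h generalizing i j with
  | leaf => rfl
  | @node l l' r r' a b hl hr ihl ihr =>
    have el := hl.tips_eq; have er := hr.tips_eq
    simp only [m, ← el, ← er]
    split_ifs <;> simp [ihl (nodup_left hn), ihr (nodup_right hn)]
  | @swap l l' r r' a b hl hr ihl ihr =>
    have el := hl.tips_eq; have er := hr.tips_eq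
    simp only [m, ← el, ← er]
    by_cases h1 : i ∈ l.tips ∧ j ∈ l.tips
    · rw [if_pos h1, if_neg (fun h2 => tips_disj hn h1.1 h2.1), if_pos h1,
        ihl (nodup_left hn)]
    · by_cases h2 : i ∈ r.tips ∧ j ∈ r.tips
      · rw [if_neg h1, if_pos h2, if_pos h2, ihr (nodup_right hn)]
      · rw [if_neg h1, if_neg h2, if_neg h2, if_neg h1]

lemma TreeEq.Mlen_eq {t t' : RTree k} (h : TreeEq t t') (hn : t.tipList.Nodup)
    (i j : Fin k) : Mlen t i j = Mlen t' i j := by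
  induction h generalizing i j with
  | leaf => rfl
  | @node l l' r r' a b hl hr ihl ihr =>
    have el := hl.tips_eq; have er := hr.tips_eq
    simp only [Mlen, ← el, ← er]
    split_ifs <;> simp [ihl (nodup_left hn), ihr (nodup_right hn)]
  | @swap l l' r r' a b hl hr ihl ihr =>
    have el := hl.tips_eq; have er := hr.tips_eq
    simp only [Mlen, ← el, ← er]
    by_cases h1 : i ∈ l.tips ∧ j ∈ l.tips
    · rw [if_pos h1, if_neg (fun h2 => tips_disj hn h1.1 h2.1), if_pos h1,
        ihl (nodup_left hn)]
    · by_cases h2 : i ∈ r.tips ∧ j ∈ r.tips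
      · rw [if_neg h1, if_pos h2, if_pos h2, ihr (nodup_right hn)]
      · rw [if_neg h1, if_neg h2, if_neg h2, if_neg h1]

lemma TreeEq.pend_eq {t t' : RTree k} (h : TreeEq t t') (hn : t.tipList.Nodup)
    (i : Fin k) : pend t i = pend t' i := by
  induction h generalizing i with
  | leaf => rfl
  | @node l l' r r' a b hl hr ihl ihr =>
    have el := hl.tips_eq; have er := hr.tips_eq
    simp only [pend, ← el, ← er, ← hl.isLeaf_eq, ← hr.isLeaf_eq]
    split_ifs <;> simp [ihl (nodup_left hn), ihr (nodup_right hn)]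
  | @swap l l' r r' a b hl hr ihl ihr =>
    have el := hl.tips_eq; have er := hr.tips_eq
    simp only [pend, ← el, ← er, ← hl.isLeaf_eq, ← hr.isLeaf_eq]
    by_cases h1 : i ∈ l.tips
    · rw [if_pos h1, if_neg (fun h2 => tips_disj hn h1 h2), if_pos h1]
      split_ifs <;> simp [ihl (nodup_left hn)]
    · by_cases h2 : i ∈ r.tips
      · rw [if_neg h1, if_pos h2, if_pos h2]
        split_ifs <;> simp [ihr (nodup_right hn)]
      · rw [if_neg h1, if_neg h2, if_neg h2, if_neg h1]

lemma vPair_comm (lam : ℝ) (T : RTree k) (i j : Fin k) :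
    vPair lam T i j = vPair lam T j i := by
  unfold vPair; rw [m_comm, Mlen_comm]

lemma tips_eq_univ {T : RTree k} (h : T.IsPhylo) : T.tips = Finset.univ := by
  ext i; simp [tips, List.mem_toFinset, h.2 i]

lemma mem_tipPairs {p : Fin k × Fin k} : p ∈ tipPairs k ↔ p.1 < p.2 := by
  simp [tipPairs]

/-- Embedding of the tree vector into a Euclidean space. -/
noncomputable def vec (lam : ℝ) (T : RTree k) :
    EuclideanSpace ℝ ({p : Fin k × Fin k // p ∈ tipPairs k} ⊕ Fin k) :=
  WithLp.toLp 2 fun x => Sum.elim (fun p : {p : Fin k × Fin k // p ∈ tipPairs k} =>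
    vPair lam T p.1.1 p.1.2) (fun i => vTip lam T i) x

lemma treeDist_eq_dist (lam : ℝ) (Ta Tb : RTree k) :
    treeDist lam Ta Tb = dist (vec lam Ta) (vec lam Tb) := by
  unfold treeDist
  rw [EuclideanSpace.dist_eq, Fintype.sum_sum_type]
  have hd : ∀ x y : ℝ, dist x y ^ 2 = (x - y) ^ 2 := fun x y => by
    rw [Real.dist_eq, sq_abs]
  congr 1
  congr 1
  · rw [← Finset.sum_coe_sort (tipPairs k)
      (fun p => (vPair lam Ta p.1 p.2 - vPair lam Tb p.1 p.2) ^ 2)]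
    exact Finset.sum_congr rfl (fun p _ => by simp [vec, hd])
  · exact Finset.sum_congr rfl (fun i _ => by simp [vec, hd])
end Aux
end RTree
open RTree in
/-- for every `λ ∈ (0,1]`, `d_λ` is a metric on rooted binary
trees on `k` labeled tips with positive branch lengths; in particular
`d_λ(T_a,T_b) = 0` iff `T_a = T_b`. -/
theorem treeDist_is_metric {k : ℕ} (lam : ℝ) (h0 : 0 < lam) (h1 : lam ≤ 1) :
    (∀ Ta Tb : RTree k, Ta.IsPhylo → Tb.IsPhylo → Ta.PosLens → Tb.PosLens →
      0 ≤ treeDist lam Ta Tb) ∧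
    (∀ Ta Tb : RTree k, Ta.IsPhylo → Tb.IsPhylo → Ta.PosLens → Tb.PosLens →
      (treeDist lam Ta Tb = 0 ↔ TreeEq Ta Tb)) ∧
    (∀ Ta Tb : RTree k, Ta.IsPhylo → Tb.IsPhylo → Ta.PosLens → Tb.PosLens →
      treeDist lam Ta Tb = treeDist lam Tb Ta) ∧
    (∀ Ta Tb Tc : RTree k, Ta.IsPhylo → Tb.IsPhylo → Tc.IsPhylo →
      Ta.PosLens → Tb.PosLens → Tc.PosLens →
      treeDist lam Ta Tb ≤ treeDist lam Ta Tc + treeDist lam Tc Tb) := by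
  refine ⟨fun _ _ _ _ _ _ => Real.sqrt_nonneg _, ?_, ?_, ?_⟩
  · intro Ta Tb hA hB hpA hpB
    constructor
    · intro hz
      unfold treeDist at hz
      have hnn1 : 0 ≤ ∑ p ∈ tipPairs k,
          (vPair lam Ta p.1 p.2 - vPair lam Tb p.1 p.2) ^ 2 :=
        Finset.sum_nonneg fun _ _ => sq_nonneg _
      have hnn2 : 0 ≤ ∑ i : Fin k, (vTip lam Ta i - vTip lam Tb i) ^ 2 :=
        Finset.sum_nonneg fun _ _ => sq_nonneg _
      have hsum := (Real.sqrt_eq_zero (by linarith)).mp hz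
      have hz1 : ∑ p ∈ tipPairs k,
          (vPair lam Ta p.1 p.2 - vPair lam Tb p.1 p.2) ^ 2 = 0 := by linarith
      have hz2 : ∑ i : Fin k, (vTip lam Ta i - vTip lam Tb i) ^ 2 = 0 := by linarith
      have hvp := (Finset.sum_eq_zero_iff_of_nonneg (fun p _ => sq_nonneg _)).mp hz1
      have hvt := (Finset.sum_eq_zero_iff_of_nonneg (fun (i : Fin k) _ => sq_nonneg _)).mp hz2
      have hpend : ∀ i, pend Ta i = pend Tb i := by
        intro i
        have h := sub_eq_zero.mp (pow_eq_zero_iff two_ne_zero |>.mp (hvt i (Finset.mem_univ i)))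
        unfold vTip at h
        have : lam * pend Ta i = lam * pend Tb i := by linarith
        exact mul_left_cancel₀ (ne_of_gt h0) this
      have hvpair : ∀ i j : Fin k, i ≠ j → vPair lam Ta i j = vPair lam Tb i j := by
        intro i j hij
        rcases lt_or_gt_of_ne hij with h | h
        · exact sub_eq_zero.mp (pow_eq_zero_iff two_ne_zero |>.mp
            (hvp (i, j) (mem_tipPairs.mpr h)))
        · rw [vPair_comm lam Ta, vPair_comm lam Tb]
          exact sub_eq_zero.mp (pow_eq_zero_iff two_ne_zero |>.mp
            (hvp (j, i) (mem_tipPairs.mpr h)))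
      exact reconstruct h0 h1 Ta Tb hA.1 hB.1 hpA hpB
        ((tips_eq_univ hA).trans (tips_eq_univ hB).symm)
        (fun i j _ _ hij => hvpair i j hij) (fun i _ => hpend i)
    · intro he
      unfold treeDist
      have hz1 : ∑ p ∈ tipPairs k,
          (vPair lam Ta p.1 p.2 - vPair lam Tb p.1 p.2) ^ 2 = 0 :=
        Finset.sum_eq_zero fun p _ => by
          unfold vPair
          rw [he.m_eq hA.1, he.Mlen_eq hA.1, sub_self]
          exact zero_pow two_ne_zero
      have hz2 : ∑ i : Fin k, (vTip lam Ta i - vTip lam Tb i) ^ 2 = 0 :=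
        Finset.sum_eq_zero fun i _ => by
          unfold vTip
          rw [he.pend_eq hA.1, sub_self]
          exact zero_pow two_ne_zero
      rw [hz1, hz2, add_zero, Real.sqrt_zero]
  · intro Ta Tb _ _ _ _
    unfold treeDist
    rw [show (∑ p ∈ tipPairs k, (vPair lam Ta p.1 p.2 - vPair lam Tb p.1 p.2) ^ 2) =
        ∑ p ∈ tipPairs k, (vPair lam Tb p.1 p.2 - vPair lam Ta p.1 p.2) ^ 2 from
      Finset.sum_congr rfl (fun p _ => by ring)]
    rw [show (∑ i : Fin k, (vTip lam Ta i - vTip lam Tb i) ^ 2) =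
        ∑ i : Fin k, (vTip lam Tb i - vTip lam Ta i) ^ 2 from
      Finset.sum_congr rfl (fun i _ => by ring)]
  · intro Ta Tb Tc _ _ _ _ _ _
    rw [treeDist_eq_dist lam Ta Tb, treeDist_eq_dist lam Ta Tc, treeDist_eq_dist lam Tc Tb]
    exact dist_triangle _ _ _
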